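/- Let C be a planar convex body that is k_C-rotationally symmetric about a point p in its interior, where k_C is a composite integer whose smallest divisor greater than 1 equals 3 (so C is multi-rotationally symmetric with minimal degree 3). Then d_M(P_3) ≠ R, i.e. diam(C ∩ S_3) ≠ R; equivalently, R < 2 r sin(π/3) = √3 · r. -/

import Mathlib

open Metric Set

/-- Rotation of angle `α` about the point `p` in the plane `ℂ`. -/
noncomputable def rot (p : ℂ) (α : ℝ) : ℂ → ℂ :=
  fun z => p + Complex.exp (α * Complex.I) * (z - p)

/-- A planar convex body: a compact convex subset of the plane with nonempty interior. -/
def IsConvexBody (C : Set ℂ) : Prop :=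
  IsCompact C ∧ Convex ℝ C ∧ (interior C).Nonempty

/-- `C` is `k`-rotationally symmetric about `p`: the rotation of angle `2π/k`
about `p` maps `C` onto itself. -/
def IsRotSym (C : Set ℂ) (p : ℂ) (k : ℕ) : Prop :=
  rot p (2 * Real.pi / k) '' C = C

/-- The closed convex sector at `p` spanned by `x - p` and `ρ_k(x) - p`. -/
noncomputable def sector (p x : ℂ) (k : ℕ) : Set ℂ :=
  {z | ∃ a b : ℝ, 0 ≤ a ∧ 0 ≤ b ∧
    z = p + (a : ℂ) * (x - p) + (b : ℂ) * (rot p (2 * Real.pi / k) x - p)}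

/-- The maximum relative diameter of the standard `k`-partition of `C`
(with center `p` and endpoint `x`): the diameter of one piece `C ∩ S_k`. -/
noncomputable def dM (C : Set ℂ) (p x : ℂ) (k : ℕ) : ℝ :=
  Metric.diam (C ∩ sector p x k)

/-- The circumradius of `C` with respect to `p`: `sup_{y ∈ C} dist p y`. -/
noncomputable def circumrad (C : Set ℂ) (p : ℂ) : ℝ :=
  ⨆ y ∈ C, dist p y

/-!
The tangent to the inscribed disc at the nearest frontier point `x` supports `C`, so every
`y ∈ C` satisfies `⟪x - p, y - p⟫ ≤ r²`. Some rotate of `y` by a multiple of `2π/k_C` makes an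
angle at most `π/k_C` with `x - p`, whence `|y - p| cos (π/k_C) ≤ r`. As `3 ∣ k_C` and `k_C ≥ 6`,
this gives `R ≤ 2r/√3 < √3 r`. On the other hand `x` and its rotate by `2π/3` both lie in
`C ∩ S_3` and are `√3 r` apart, so `d_M(P_3) ≥ √3 r > R`.
-/

open scoped InnerProductSpace ComplexConjugate Real

theorem ball_infDist_frontier_subset_interior {E : Type*} [NormedAddCommGroup E]
    [NormedSpace ℝ E] {C : Set E} {p : E} (hp : p ∈ interior C) :
    ball p (infDist p (frontier C)) ⊆ interior C := by
  intro z hz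
  refine (convex_ball p _).isPreconnected.subset_of_closure_inter_subset isOpen_interior
    ⟨p, mem_ball_self (pos_of_mem_ball hz), hp⟩ ?_ hz
  rintro w ⟨hw, hwball⟩
  by_contra hwint
  exact disjoint_left.1 disjoint_ball_infDist hwball ⟨closure_mono interior_subset hw, hwint⟩

theorem exists_ne_zero_forall_inner_le_of_mem_frontier {F : Type*} [NormedAddCommGroup F]
    [InnerProductSpace ℝ F] [CompleteSpace F] {C : Set F} (hC : Convex ℝ C)
    (hint : (interior C).Nonempty) {x : F} (hx : x ∈ frontier C) :
    ∃ v ≠ 0, ∀ z ∈ closure C, ⟪v, z⟫_ℝ ≤ ⟪v, x⟫_ℝ := by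
  obtain ⟨f, hf⟩ := geometric_hahn_banach_open_point hC.interior isOpen_interior hx.2
  set v := (InnerProductSpace.toDual ℝ F).symm f
  have hfv : ∀ z, f z = ⟪v, z⟫_ℝ := fun z => InnerProductSpace.toDual_symm_apply.symm
  refine ⟨v, fun h0 => ?_, fun z hz => ?_⟩
  · obtain ⟨p, hp⟩ := hint
    simpa only [hfv, h0, inner_zero_left, lt_self_iff_false] using hf p hp
  · rw [← hC.closure_interior_eq_closure_of_nonempty_interior hint] at hz
    have hfz : f z ≤ f x :=
      closure_minimal (fun w hw => (hf w hw).le) (isClosed_le f.continuous continuous_const) hz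
    simpa only [hfv] using hfz

theorem inner_sub_le_sq_of_ball_subset {F : Type*} [NormedAddCommGroup F]
    [InnerProductSpace ℝ F] [CompleteSpace F] {C : Set F} (hC : Convex ℝ C) {p x y : F} {r : ℝ}
    (hr : 0 < r) (hball : ball p r ⊆ C) (hx : x ∈ frontier C) (hxr : ‖x - p‖ = r)
    (hy : y ∈ C) : ⟪x - p, y - p⟫_ℝ ≤ r ^ 2 := by
  have hint : ball p r ⊆ interior C := interior_maximal hball isOpen_ball
  obtain ⟨v, hv, hsupp⟩ :=
    exists_ne_zero_forall_inner_le_of_mem_frontier hC ⟨p, hint (mem_ball_self hr)⟩ hx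
  have hsep : ∀ z ∈ closure C, ⟪v, z - p⟫_ℝ ≤ ⟪v, x - p⟫_ℝ := fun z hz => by
    simpa only [inner_sub_right, sub_le_sub_iff_right] using hsupp z hz
  have hvpos : 0 < ‖v‖ := norm_pos_iff.2 hv
  -- test the supporting line at the point of the closed inscribed ball farthest in direction `v`
  have hmax : r * ‖v‖ ≤ ⟪v, x - p⟫_ℝ := by
    have hmem : p + (r / ‖v‖) • v ∈ closure C := by
      refine closure_mono hball ?_
      rw [closure_ball p hr.ne', mem_closedBall, dist_eq_norm, add_sub_cancel_left, norm_smul,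
        Real.norm_of_nonneg (by positivity), div_mul_cancel₀ _ hvpos.ne']
    have := hsep _ hmem
    rwa [add_sub_cancel_left, real_inner_smul_right, real_inner_self_eq_norm_sq, sq,
      ← mul_assoc, div_mul_cancel₀ _ hvpos.ne'] at this
  -- equality in Cauchy–Schwarz: the supporting line is orthogonal to `x - p`
  have heq : ⟪v, x - p⟫_ℝ = ‖v‖ * ‖x - p‖ :=
    le_antisymm (real_inner_le_norm _ _) (by rw [hxr]; linarith)
  have hparallel : r • v = ‖v‖ • (x - p) := hxr ▸ inner_eq_norm_mul_iff_real.1 heq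
  have key : ‖v‖ * ⟪x - p, y - p⟫_ℝ ≤ ‖v‖ * r ^ 2 :=
    calc ‖v‖ * ⟪x - p, y - p⟫_ℝ = r * ⟪v, y - p⟫_ℝ := by
          rw [← real_inner_smul_left, ← hparallel, real_inner_smul_left]
      _ ≤ r * ⟪v, x - p⟫_ℝ := mul_le_mul_of_nonneg_left (hsep y (subset_closure hy)) hr.le
      _ = ‖v‖ * r ^ 2 := by rw [heq, hxr]; ring
  exact le_of_mul_le_mul_left key hvpos

open Complex

theorem rot_zero (p z : ℂ) : rot p 0 z = z := by
  simp [rot]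

theorem rot_rot (p : ℂ) (α β : ℝ) (z : ℂ) : rot p α (rot p β z) = rot p (α + β) z := by
  simp only [rot, ofReal_add, add_mul, exp_add]
  ring

theorem dist_rot_self (p z : ℂ) (θ : ℝ) :
    dist z (rot p θ z) = ‖2 * Real.sin (θ / 2)‖ * dist z p := by
  rw [dist_comm, dist_eq, dist_eq, ← norm_exp_I_mul_ofReal_sub_one, ← norm_mul, rot, mul_comm I]
  congr 1
  ring

theorem self_mem_sector (p x : ℂ) (k : ℕ) : x ∈ sector p x k :=
  ⟨1, 0, zero_le_one, le_rfl, by push_cast; ring⟩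

theorem rot_mem_sector (p x : ℂ) (k : ℕ) : rot p (2 * π / k) x ∈ sector p x k :=
  ⟨0, 1, le_rfl, zero_le_one, by push_cast; ring⟩

theorem dist_rot_le_dM {C : Set ℂ} (hC : Bornology.IsBounded C) {p x : ℂ} {k : ℕ} (hx : x ∈ C)
    (hrx : rot p (2 * π / k) x ∈ C) : dist x (rot p (2 * π / k) x) ≤ dM C p x k :=
  dist_le_diam_of_mem (hC.subset inter_subset_left) ⟨hx, self_mem_sector p x k⟩
    ⟨hrx, rot_mem_sector p x k⟩

theorem IsRotSym.rot_intCast_mul_mem {C : Set ℂ} {p : ℂ} {k : ℕ} (h : IsRotSym C p k) (j : ℤ)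
    {y : ℂ} (hy : y ∈ C) : rot p (j * (2 * π / k)) y ∈ C := by
  set α := 2 * π / k
  have hfwd : ∀ y ∈ C, rot p α y ∈ C := fun y hy => h ▸ mem_image_of_mem _ hy
  have hbwd : ∀ y ∈ C, rot p (-α) y ∈ C := by
    intro y hy
    rw [← h] at hy
    obtain ⟨y', hy', rfl⟩ := hy
    rwa [rot_rot, neg_add_cancel, rot_zero]
  induction j generalizing y with
  | zero => simpa [rot_zero] using hy
  | succ i ih =>
    rw [show ((i + 1 : ℤ) : ℝ) * α = α + i * α by push_cast; ring, ← rot_rot]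
    exact hfwd _ (ih hy)
  | pred i ih =>
    rw [show ((-i - 1 : ℤ) : ℝ) * α = -α + (-i : ℤ) * α by push_cast; ring, ← rot_rot]
    exact hbwd _ (ih hy)

theorem exists_cos_mul_norm_le_re_exp_mul (z : ℂ) {k : ℕ} (hk : 0 < k) :
    ∃ j : ℤ, Real.cos (π / k) * ‖z‖ ≤ (exp ((j * (2 * π / k) : ℝ) * I) * z).re := by
  set t := -z.arg * (k / (2 * π))
  refine ⟨round t, ?_⟩
  set φ := (round t : ℝ) * (2 * π / k) + z.arg
  have hφ : φ = 2 * π / k * (round t - t) := by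
    simp only [φ, t]
    field_simp
    ring
  have hφ_le : |φ| ≤ π / k := by
    rw [hφ, abs_mul, abs_of_pos (by positivity), abs_sub_comm]
    calc 2 * π / k * |t - round t| ≤ 2 * π / k * (1 / 2) :=
          mul_le_mul_of_nonneg_left (abs_sub_round t) (by positivity)
      _ = π / k := by ring
  have hcos : Real.cos (π / k) ≤ Real.cos φ := by
    rw [← Real.cos_abs φ]
    exact Real.cos_le_cos_of_nonneg_of_le_pi (abs_nonneg _)
      (div_le_self Real.pi_pos.le (by exact_mod_cast hk)) hφ_le
  have hre : (exp (((round t : ℝ) * (2 * π / k) : ℝ) * I) * z).re = ‖z‖ * Real.cos φ := by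
    conv_lhs => rw [← norm_mul_exp_arg_mul_I z]
    rw [mul_left_comm, ← exp_add, ← add_mul, ← ofReal_add, re_ofReal_mul,
      exp_ofReal_mul_I_re]
  rw [hre, mul_comm]
  exact mul_le_mul_of_nonneg_left hcos (norm_nonneg z)

theorem dist_mul_cos_le_of_isRotSym {C : Set ℂ} {p u : ℂ} {k : ℕ} (hk : 0 < k)
    (hsym : IsRotSym C p k) (hu : 0 < ‖u‖) (hsupp : ∀ y ∈ C, ⟪u, y - p⟫_ℝ ≤ ‖u‖ ^ 2)
    {y : ℂ} (hy : y ∈ C) : dist p y * Real.cos (π / k) ≤ ‖u‖ := by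
  obtain ⟨j, hj⟩ := exists_cos_mul_norm_le_re_exp_mul (conj u * (y - p)) hk
  have key : ‖u‖ * (dist p y * Real.cos (π / k)) ≤ ‖u‖ * ‖u‖ :=
    calc ‖u‖ * (dist p y * Real.cos (π / k))
          = Real.cos (π / k) * ‖conj u * (y - p)‖ := by
            rw [norm_mul, norm_conj, dist_comm, dist_eq]; ring
      _ ≤ _ := hj
      _ = ⟪u, rot p (j * (2 * π / k)) y - p⟫_ℝ := by
            rw [Complex.inner, rot]; ring_nf
      _ ≤ ‖u‖ ^ 2 := hsupp _ (hsym.rot_intCast_mul_mem j hy)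
      _ = ‖u‖ * ‖u‖ := sq _
  exact le_of_mul_le_mul_left key hu

theorem Nat.exists_eq_three_mul_of_minFac_eq_three {k : ℕ} (hmin : k.minFac = 3)
    (hk : ¬ k.Prime) : ∃ m, 2 ≤ m ∧ k = 3 * m := by
  obtain ⟨m, rfl⟩ : 3 ∣ k := hmin ▸ Nat.minFac_dvd k
  refine ⟨m, ?_, rfl⟩
  by_contra! hm
  interval_cases m
  · norm_num at hmin
  · exact hk Nat.prime_three

theorem circumrad_lt_sqrt_three_mul_of_isRotSym {C : Set ℂ} {p u : ℂ} {k : ℕ} (hk : 6 ≤ k)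
    (hsym : IsRotSym C p k) (hu : 0 < ‖u‖) (hsupp : ∀ y ∈ C, ⟪u, y - p⟫_ℝ ≤ ‖u‖ ^ 2) :
    circumrad C p < √3 * ‖u‖ := by
  have hcos : √3 / 2 ≤ Real.cos (π / k) := by
    rw [← Real.cos_pi_div_six]
    refine Real.cos_le_cos_of_nonneg_of_le_pi (by positivity) (by linarith [Real.pi_pos]) ?_
    exact div_le_div_of_nonneg_left Real.pi_pos.le (by norm_num) (by exact_mod_cast hk)
  have hR : circumrad C p ≤ ‖u‖ / (√3 / 2) := by
    refine Real.iSup_le (fun y => Real.iSup_le (fun hy => ?_) (by positivity)) (by positivity)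
    rw [le_div_iff₀ (by positivity)]
    exact (mul_le_mul_of_nonneg_left hcos dist_nonneg).trans
      (dist_mul_cos_le_of_isRotSym (by omega) hsym hu hsupp hy)
  refine hR.trans_lt ?_
  rw [div_lt_iff₀ (by positivity)]
  nlinarith [Real.mul_self_sqrt (show (0 : ℝ) ≤ 3 by norm_num)]

theorem sqrt_three_mul_dist_le_dM {C : Set ℂ} (hC : Bornology.IsBounded C) {p x : ℂ} {m : ℕ}
    (hm : 0 < m) (hsym : IsRotSym C p (3 * m)) (hx : x ∈ C) : √3 * dist p x ≤ dM C p x 3 := by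
  have h3x := hsym.rot_intCast_mul_mem m hx
  rw [show ((m : ℤ) : ℝ) * (2 * π / (3 * m : ℕ)) = 2 * π / (3 : ℕ) by
    have : (m : ℝ) ≠ 0 := by positivity
    push_cast; field_simp] at h3x
  have := dist_rot_le_dM hC hx h3x
  rwa [dist_rot_self, dist_comm x p, show 2 * π / ((3 : ℕ) : ℝ) / 2 = π / 3 by push_cast; ring,
    Real.sin_pi_div_three, mul_div_cancel₀ _ two_ne_zero,
    Real.norm_of_nonneg (Real.sqrt_nonneg 3)] at this

theorem stmt_7_general (C : Set ℂ) (p x : ℂ) (kC : ℕ) (hC : IsConvexBody C)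
    (hcomp : ¬ kC.Prime) (hmin : kC.minFac = 3)
    (hsym : IsRotSym C p kC) (hp : p ∈ interior C)
    (hx : x ∈ frontier C) (hxr : dist p x = infDist p (frontier C)) :
    dM C p x 3 ≠ circumrad C p ∧
      circumrad C p < 2 * infDist p (frontier C) * Real.sin (Real.pi / 3) ∧
      2 * Real.sin (Real.pi / 3) = Real.sqrt 3 := by
  obtain ⟨hcpt, hconv, -⟩ := hC
  set r := infDist p (frontier C)
  have hr : 0 < r := (isClosed_frontier.notMem_iff_infDist_pos ⟨x, hx⟩).1 fun h => h.2 hp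
  have hxp : ‖x - p‖ = r := by rw [← dist_eq, dist_comm, hxr]
  have hsupp : ∀ y ∈ C, ⟪x - p, y - p⟫_ℝ ≤ ‖x - p‖ ^ 2 := fun y hy => hxp ▸
    inner_sub_le_sq_of_ball_subset hconv hr
      ((ball_infDist_frontier_subset_interior hp).trans interior_subset) hx hxp hy
  obtain ⟨m, hm, rfl⟩ := Nat.exists_eq_three_mul_of_minFac_eq_three hmin hcomp
  have hR : circumrad C p < √3 * r :=
    hxp ▸ circumrad_lt_sqrt_three_mul_of_isRotSym (by omega) hsym (hxp ▸ hr) hsupp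
  have hdM : √3 * r ≤ dM C p x 3 :=
    hxr ▸ sqrt_three_mul_dist_le_dM hcpt.isBounded (by omega) hsym
      (hcpt.isClosed.frontier_subset hx)
  have hsin : 2 * Real.sin (π / 3) = √3 := by rw [Real.sin_pi_div_three]; ring
  exact ⟨(hR.trans_le hdM).ne', by rwa [mul_right_comm, hsin], hsin⟩

/-- For a multi-rotationally symmetric planar convex body whose minimal degree
(the smallest divisor of the composite maximal degree `k_C` greater than 1)
equals `3`, one has `d_M(P_3) ≠ R`; equivalently `R < 2 r sin(π/3) = √3 r`. -/
theorem stmt_7 (C : Set ℂ) (p x : ℂ) (kC : ℕ) (hC : IsConvexBody C)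
    (hk2 : 2 ≤ kC) (hcomp : ¬ kC.Prime) (hmin : kC.minFac = 3)
    (hsym : IsRotSym C p kC) (hp : p ∈ interior C)
    (hx : x ∈ frontier C) (hxr : dist p x = infDist p (frontier C)) :
    dM C p x 3 ≠ circumrad C p ∧
      circumrad C p < 2 * infDist p (frontier C) * Real.sin (Real.pi / 3) ∧
      2 * Real.sin (Real.pi / 3) = Real.sqrt 3 :=
  stmt_7_general C p x kC hC hcomp hmin hsym hp hx hxr
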